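/- Let f = x_i^{u_i} x_j^{u_j} − x_k^{u_k} x_l^{u_l} be a primitive binomial of I_A with i, j, k, l pairwise distinct and u_i < c_i, u_j < c_j, u_k < c_k, u_l < c_l. Then f is an indispensable binomial of J = I_A ∩ k[x_i,x_j,x_k,x_l], the toric ideal of {a_i,a_j,a_k,a_l}. -/

import Mathlib

open MvPolynomial Finsupp

variable (K : Type*) [Field K]

/-- The `A`-degree of an exponent vector `u ∈ ℕ^n` with respect to `a_1, …, a_n ∈ ℕ`, namely
`∑ i, u i * a i`. -/
def degN {n : ℕ} (a : Fin n → ℕ) (u : Fin n →₀ ℕ) : ℕ :=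
  ∑ i, u i * a i

/-- The defining ideal `I_A` of the monomial curve `x_i = t^{a_i}`: the ideal generated by all
binomials `x^u - x^v` with `∑ u_i a_i = ∑ v_i a_i` (equivalently, the kernel of
`k[x_1,…,x_n] → k[t]`, `x_i ↦ t^{a_i}`). -/
noncomputable def curveIdeal {n : ℕ} (a : Fin n → ℕ) : Ideal (MvPolynomial (Fin n) K) :=
  Ideal.span { f | ∃ u v : Fin n →₀ ℕ, degN a u = degN a v ∧
    f = monomial u (1 : K) - monomial v (1 : K) }

/-- `c` is the critical exponent of the variable `x_i`: the least positive integer `c` with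
`c * a_i ∈ ∑_{j ≠ i} ℕ a_j`. -/
def IsCritExp {n : ℕ} (a : Fin n → ℕ) (i : Fin n) (c : ℕ) : Prop :=
  IsLeast { m : ℕ | 0 < m ∧ ∃ u : Fin n →₀ ℕ, u i = 0 ∧ m * a i = degN a u } c

/-- `f` is a critical binomial of `I_A` with respect to `x_i` (where `c` is the vector of
critical exponents): `f = x_i^{c_i} - ∏_{j ≠ i} x_j^{u_{ij}} ∈ I_A`. -/
def IsCritBinom {n : ℕ} (a c : Fin n → ℕ) (i : Fin n) (f : MvPolynomial (Fin n) K) : Prop :=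
  ∃ u : Fin n →₀ ℕ, u i = 0 ∧
    f = monomial (Finsupp.single i (c i)) (1 : K) - monomial u (1 : K) ∧
    f ∈ curveIdeal K a

/-- The critical ideal `C_A`: the ideal generated by all critical binomials of `I_A`. -/
noncomputable def criticalIdeal {n : ℕ} (a c : Fin n → ℕ) :
    Ideal (MvPolynomial (Fin n) K) :=
  Ideal.span { f | ∃ i : Fin n, IsCritBinom K a c i f }

/-- `S` is a set of binomials generating `J`. -/
def IsBinomGenSet {σ : Type*} (J : Ideal (MvPolynomial σ K)) (S : Set (MvPolynomial σ K)) :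
    Prop :=
  (∀ f ∈ S, ∃ u v : σ →₀ ℕ, f = monomial u (1 : K) - monomial v (1 : K)) ∧
  Ideal.span S = J

/-- The monomial `x^u` is an indispensable monomial of `J`: every set of binomials generating `J`
contains a binomial one of whose monomials is `x^u`. -/
def IndispMonomial {σ : Type*} (J : Ideal (MvPolynomial σ K)) (u : σ →₀ ℕ) : Prop :=
  ∀ S : Set (MvPolynomial σ K), IsBinomGenSet K J S → ∃ f ∈ S, u ∈ f.support

/-- `f` is an indispensable binomial of `J`: every set of binomials generating `J` contains
`f` or `-f`. -/
def IndispBinomial {σ : Type*} (J : Ideal (MvPolynomial σ K)) (f : MvPolynomial σ K) : Prop :=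
  ∀ S : Set (MvPolynomial σ K), IsBinomGenSet K J S → f ∈ S ∨ -f ∈ S

/-- `x^u - x^v` is a primitive binomial of `I_A`: it is a nonzero binomial of `I_A` and there is
no other nonzero binomial `x^{u'} - x^{v'} ∈ I_A` with `x^{u'} ∣ x^u` and `x^{v'} ∣ x^v`. -/
def IsPrimitive {n : ℕ} (a : Fin n → ℕ) (u v : Fin n →₀ ℕ) : Prop :=
  u ≠ v ∧ (monomial u (1 : K) - monomial v (1 : K)) ∈ curveIdeal K a ∧
  ∀ u' v' : Fin n →₀ ℕ, u' ≤ u → v' ≤ v → u' ≠ v' →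
    (monomial u' (1 : K) - monomial v' (1 : K)) ∈ curveIdeal K a → u' = u ∧ v' = v

/-!
Write `U = (u_i, u_j, 0, 0)` and `V = (0, 0, u_k, u_l)` for the exponents of `f` in four variables.
Since every exponent is below the corresponding critical exponent, the only exponent vectors of
`A`-degree `deg U` are `U` and `V`: an exponent `w` with `w_i ≥ u_i` or `w_j ≥ u_j` leaves a
relation `m a_p ∈ ∑_{q ≠ p} ℕ a_q` with `0 < m < c_p` unless `w = U` (symmetrically for `V`), and
an exponent below `U` and `V` everywhere contradicts primitivity. Consequently the only binomial of
`J` one of whose monomials divides `x^U` is `±f`, so in a binomial generating set without `±f`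
every product `r · (x^w - x^w')` has zero coefficient at `x^U`, while `f` has coefficient `1`.
-/

open Function

section Degree

variable {n : ℕ} (a : Fin n → ℕ)

lemma degN_add (u v : Fin n →₀ ℕ) : degN a (u + v) = degN a u + degN a v := by
  simp [degN, add_mul, Finset.sum_add_distrib]

lemma degN_single (p : Fin n) (m : ℕ) : degN a (single p m) = m * a p := by
  simp [degN, single_apply, ite_mul]

lemma degN_mapDomain {m : ℕ} (e : Fin m → Fin n) (x : Fin m →₀ ℕ) :
    degN a (mapDomain e x) = degN (a ∘ e) x := by
  induction x using Finsupp.induction_linear with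
  | zero => simp [degN]
  | add x y hx hy => rw [mapDomain_add, degN_add, degN_add, hx, hy]
  | single p r => rw [mapDomain_single, degN_single, degN_single, comp_apply]

lemma degN_fin_four (b : Fin 4 → ℕ) (x : Fin 4 →₀ ℕ) :
    degN b x = x 0 * b 0 + x 1 * b 1 + x 2 * b 2 + x 3 * b 3 := by
  rw [degN, Fin.sum_univ_four]

variable {a}

lemma degN_eq_zero_iff (ha : ∀ p, 0 < a p) {w : Fin n →₀ ℕ} : degN a w = 0 ↔ w = 0 := by
  simp [degN, Finset.sum_eq_zero_iff, (ha _).ne', Finsupp.ext_iff]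

end Degree

section CurveIdeal

variable {n : ℕ} (a : Fin n → ℕ)

lemma aeval_X_pow_monomial (w : Fin n →₀ ℕ) :
    aeval (fun p ↦ (Polynomial.X : Polynomial K) ^ a p) (monomial w (1 : K)) =
      Polynomial.X ^ degN a w := by
  rw [aeval_monomial, map_one, one_mul, prod_fintype _ _ (fun p ↦ by simp),
    degN, ← Finset.prod_pow_eq_pow_sum]
  simp only [← pow_mul, mul_comm]

lemma monomial_sub_mem_curveIdeal_iff {u v : Fin n →₀ ℕ} :
    monomial u (1 : K) - monomial v 1 ∈ curveIdeal K a ↔ degN a u = degN a v := by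
  refine ⟨fun h ↦ ?_, fun h ↦ Ideal.subset_span ⟨u, v, h, rfl⟩⟩
  let φ := aeval (R := K) fun p ↦ (Polynomial.X : Polynomial K) ^ a p
  have hker : curveIdeal K a ≤ RingHom.ker φ := by
    rw [curveIdeal, Ideal.span_le]
    rintro _ ⟨u', v', hd, rfl⟩
    simp [φ, aeval_X_pow_monomial, hd]
  have hφ := hker h
  rw [RingHom.mem_ker, map_sub, sub_eq_zero, aeval_X_pow_monomial, aeval_X_pow_monomial] at hφ
  simpa using congrArg Polynomial.natDegree hφ

end CurveIdeal

def critSet {n : ℕ} (a : Fin n → ℕ) (p : Fin n) : Set ℕ :=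
  {m | 0 < m ∧ ∃ u : Fin n →₀ ℕ, u p = 0 ∧ m * a p = degN a u}

lemma critSet_comp_subset {m n : ℕ} (a : Fin n → ℕ) {e : Fin m → Fin n} (he : Injective e)
    (p : Fin m) : critSet (a ∘ e) p ⊆ critSet a (e p) := by
  rintro r ⟨hr, x, hx, h⟩
  exact ⟨hr, mapDomain e x, by rw [mapDomain_apply he, hx], by rwa [degN_mapDomain]⟩

lemma IsPrimitive.comp_of_mapDomain {m n : ℕ} {a : Fin n → ℕ} {e : Fin m → Fin n}
    (he : Injective e) {u v : Fin m →₀ ℕ}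
    (h : IsPrimitive K a (mapDomain e u) (mapDomain e v)) : IsPrimitive K (a ∘ e) u v := by
  obtain ⟨hne, hmem, hmin⟩ := h
  have hmem_iff (u v : Fin m →₀ ℕ) :
      monomial (mapDomain e u) (1 : K) - monomial (mapDomain e v) 1 ∈ curveIdeal K a ↔
        monomial u (1 : K) - monomial v 1 ∈ curveIdeal K (a ∘ e) := by
    simp only [monomial_sub_mem_curveIdeal_iff, degN_mapDomain]
  refine ⟨fun huv ↦ hne (congrArg _ huv), (hmem_iff u v).1 hmem, fun u' v' hu hv hne' h' ↦ ?_⟩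
  have := hmin _ _ (mapDomain_mono hu) (mapDomain_mono hv)
    ((mapDomain_injective he).ne hne') ((hmem_iff u' v').2 h')
  exact ⟨mapDomain_injective he this.1, mapDomain_injective he this.2⟩

section CritExp

variable {n : ℕ} {a : Fin n → ℕ} (ha : ∀ p, 0 < a p) {p : Fin n} {c : ℕ}
  (hc : c ∈ lowerBounds (critSet a p))
include ha hc

lemma eq_single_of_degN_eq_of_lt {m : ℕ} (hm : m < c) {w : Fin n →₀ ℕ}
    (h : degN a w = m * a p) : w = single p m := by
  have hsplit : degN a w = w p * a p + degN a (w.erase p) := by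
    rw [← degN_single, ← degN_add, single_add_erase]
  have hwp : w p ≤ m := Nat.le_of_mul_le_mul_right (by omega) (ha p)
  have hrest : (m - w p) * a p = degN a (w.erase p) := by
    rw [Nat.sub_mul]; omega
  have hwp' : w p = m := by
    by_contra hlt
    have := hc ⟨by omega, w.erase p, erase_same, hrest⟩
    omega
  rw [hwp', Nat.sub_self, zero_mul, eq_comm, degN_eq_zero_iff ha] at hrest
  rw [← single_add_erase p w, hwp', hrest, add_zero]

lemma eq_single_add_single_of_degN_eq {m : ℕ} (hm : m < c) {q : Fin n} {m' : ℕ}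
    {w : Fin n →₀ ℕ} (hq : m' ≤ w q) (h : degN a w = degN a (single p m + single q m')) :
    w = single p m + single q m' := by
  have hle : single q m' ≤ w := single_le_iff.mpr hq
  have hrest : degN a (w - single q m') = m * a p := by
    have := degN_add a (w - single q m') (single q m')
    rw [tsub_add_cancel_of_le hle, h, degN_add, degN_single, degN_single] at this
    omega
  rw [← eq_single_of_degN_eq_of_lt ha hc hm hrest, tsub_add_cancel_of_le hle]

end CritExp

section FourVariables

variable {b : Fin 4 → ℕ} (hb : ∀ p, 0 < b p) {c : Fin 4 → ℕ}
  (hc : ∀ p, c p ∈ lowerBounds (critSet b p)) {ui uj uk ul : ℕ}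
  (hi : ui < c 0) (hj : uj < c 1) (hk : uk < c 2) (hl : ul < c 3)
  (hprim : IsPrimitive K b (single 0 ui + single 1 uj) (single 2 uk + single 3 ul))
include hb hc hi hj hk hl hprim

lemma eq_or_eq_of_degN_eq {x : Fin 4 →₀ ℕ}
    (hx : degN b x = degN b (single 0 ui + single 1 uj)) :
    x = single 0 ui + single 1 uj ∨ x = single 2 uk + single 3 ul := by
  have hUV := (monomial_sub_mem_curveIdeal_iff K b).1 hprim.2.1
  by_cases hij : ui ≤ x 0 ∨ uj ≤ x 1
  · left
    rcases hij with h0 | h1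
    · rw [add_comm] at hx ⊢
      exact eq_single_add_single_of_degN_eq hb (hc 1) hj h0 hx
    · exact eq_single_add_single_of_degN_eq hb (hc 0) hi h1 hx
  by_cases hkl : uk ≤ x 2 ∨ ul ≤ x 3
  · right
    rw [hUV] at hx
    rcases hkl with h2 | h3
    · rw [add_comm] at hx ⊢
      exact eq_single_add_single_of_degN_eq hb (hc 3) hl h2 hx
    · exact eq_single_add_single_of_degN_eq hb (hc 2) hk h3 hx
  exfalso
  push Not at hij hkl
  obtain ⟨d0, rfl⟩ := Nat.exists_eq_add_of_lt hij.1
  obtain ⟨d1, rfl⟩ := Nat.exists_eq_add_of_lt hij.2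
  -- Cancelling the common factor `x₀^(x 0) x₁^(x 1)` of `x^x` and `x^U` leaves a binomial of
  -- `I_b` whose first monomial properly divides `x^U`, against primitivity.
  have hdeg : degN b (single 0 (d0 + 1) + single 1 (d1 + 1)) =
      degN b (single 2 (x 2) + single 3 (x 3)) := by
    simp only [degN_fin_four, Finsupp.coe_add, Pi.add_apply, single_apply, Fin.reduceEq,
      if_true, if_false, zero_mul, add_zero, zero_add] at hx ⊢
    linarith
  have hmin := hprim.2.2 _ _ (add_le_add (by simp) (by simp))
    (add_le_add (by simpa using hkl.1.le) (by simpa using hkl.2.le))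
    (fun h ↦ by simpa using congrArg (· 0) h) ((monomial_sub_mem_curveIdeal_iff K b).2 hdeg)
  have := congrArg (· 2) hmin.2
  simp only [Finsupp.coe_add, Pi.add_apply, single_apply, Fin.reduceEq, if_true, if_false,
    add_zero] at this
  omega

lemma eq_and_eq_of_le_of_degN_eq {w₁ w₂ : Fin 4 →₀ ℕ} (hne : w₁ ≠ w₂)
    (hdeg : degN b w₁ = degN b w₂) (hle : w₁ ≤ single 0 ui + single 1 uj) :
    w₁ = single 0 ui + single 1 uj ∧ w₂ = single 2 uk + single 3 ul := by
  set U : Fin 4 →₀ ℕ := single 0 ui + single 1 uj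
  have hsplit : U - w₁ + w₁ = U := tsub_add_cancel_of_le hle
  have hfib : degN b (U - w₁ + w₂) = degN b U := by
    have := congrArg (degN b) hsplit
    rw [degN_add] at this ⊢
    omega
  rcases eq_or_eq_of_degN_eq K hb hc hi hj hk hl hprim hfib with h | h
  · exact absurd (add_left_cancel (h.trans hsplit.symm)).symm hne
  · exact hprim.2.2 _ _ hle (h ▸ le_add_self) hne ((monomial_sub_mem_curveIdeal_iff K b).2 hdeg)

end FourVariables

lemma indispBinomial_of_forall_le {σ : Type*} {J : Ideal (MvPolynomial σ K)} {U V : σ →₀ ℕ}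
    (hUV : U ≠ V) (hf : monomial U (1 : K) - monomial V 1 ∈ J)
    (huniq : ∀ w₁ w₂, w₁ ≠ w₂ → monomial w₁ (1 : K) - monomial w₂ 1 ∈ J → w₁ ≤ U →
      w₁ = U ∧ w₂ = V) :
    IndispBinomial K J (monomial U (1 : K) - monomial V 1) := by
  classical
  rintro S ⟨hbinom, hspan⟩
  by_contra! hS
  have hvanish : ∀ g ∈ Ideal.span S, ∀ r, coeff U (r * g) = 0 := by
    intro g hg
    induction hg using Submodule.span_induction with
    | zero => simp
    | add g g' _ _ hg hg' => simp [mul_add, hg, hg']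
    | smul r' g _ hg => intro r; rw [smul_eq_mul, ← mul_assoc, hg]
    | mem s hs =>
      intro r
      obtain ⟨w₁, w₂, rfl⟩ := hbinom s hs
      by_cases hw : w₁ = w₂
      · simp [hw]
      have hsJ : monomial w₁ (1 : K) - monomial w₂ 1 ∈ J := hspan ▸ Ideal.subset_span hs
      have h₁ : ¬ w₁ ≤ U := fun hle ↦ by
        obtain ⟨rfl, rfl⟩ := huniq w₁ w₂ hw hsJ hle
        exact hS.1 hs
      have h₂ : ¬ w₂ ≤ U := fun hle ↦ by
        obtain ⟨rfl, rfl⟩ := huniq w₂ w₁ (Ne.symm hw) (by simpa using J.neg_mem hsJ) hle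
        exact hS.2 (by simpa using hs)
      rw [mul_sub, coeff_sub, coeff_mul_monomial', coeff_mul_monomial', if_neg h₁, if_neg h₂,
        sub_zero]
  have := hvanish _ (hspan ▸ hf) 1
  rw [one_mul, coeff_sub, coeff_monomial, coeff_monomial, if_pos rfl, if_neg hUV.symm,
    sub_zero] at this
  exact one_ne_zero this

theorem statement14 {n : ℕ} (a c : Fin n → ℕ) (ha : ∀ i, 0 < a i)
    (hc : ∀ i, IsCritExp a i (c i))
    (i j k l : Fin n) (hij : i ≠ j) (hik : i ≠ k) (hil : i ≠ l) (hjk : j ≠ k)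
    (hjl : j ≠ l) (hkl : k ≠ l) (ui uj uk ul : ℕ)
    (hprim : IsPrimitive K a (Finsupp.single i ui + Finsupp.single j uj)
      (Finsupp.single k uk + Finsupp.single l ul))
    (hi : ui < c i) (hj : uj < c j) (hk : uk < c k) (hl : ul < c l) :
    IndispBinomial K (curveIdeal K ![a i, a j, a k, a l])
      (monomial (Finsupp.single (0 : Fin 4) ui + Finsupp.single (1 : Fin 4) uj) (1 : K) -
        monomial (Finsupp.single (2 : Fin 4) uk + Finsupp.single (3 : Fin 4) ul) (1 : K)) := by
  set e : Fin 4 → Fin n := ![i, j, k, l]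
  have he : Injective e := by
    intro x y h
    fin_cases x <;> fin_cases y <;> simp_all [e, eq_comm]
  have hb : ![a i, a j, a k, a l] = a ∘ e := by
    ext p; fin_cases p <;> rfl
  have hprim' : IsPrimitive K (a ∘ e) (single 0 ui + single 1 uj) (single 2 uk + single 3 ul) :=
    IsPrimitive.comp_of_mapDomain K he (by simpa [e, mapDomain_add, mapDomain_single] using hprim)
  have hc' (p : Fin 4) : (c ∘ e) p ∈ lowerBounds (critSet (a ∘ e) p) :=
    lowerBounds_mono_set (critSet_comp_subset a he p) (hc (e p)).2
  rw [hb]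
  refine indispBinomial_of_forall_le K hprim'.1 hprim'.2.1 fun w₁ w₂ hne hmem hle ↦ ?_
  exact eq_and_eq_of_le_of_degN_eq K (fun p ↦ ha (e p)) hc' hi hj hk hl hprim' hne
    ((monomial_sub_mem_curveIdeal_iff K _).1 hmem) hle
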